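/- arXiv:1109.0827 — 2 statements merged into one kernel-verified Lean document; each statement's English description precedes it below -/
import Mathlib

section
/- Let l ≥ 2 be an integer, M = 2^l, and let s_k = exp(2πik/M) for 0 ≤ k ≤ M - 1 denote the points of the M-PSK signal set. Define the relay labelling X_r by X_r(k) = s_k if k is even and X_r(k) = s_{(k + M/2) mod M} if k is odd. Then for all k, k' ∈ {0, …, M - 1} with k ≠ k', writing n = |k - k'|: |X_r(k) - X_r(k')| = 2·|sin(π·n/M)| if n is even, and |X_r(k) - X_r(k')| = 2·|cos(π·n/M)| if n is odd. -/
open Real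

/-!
With `ζ = exp (2πi/M)` we have `ζ ^ (M/2) = -1`, so shifting odd indices by `M/2` flips their
sign and the relay labelling is `k ↦ (-ζ) ^ k`. Since `-ζ` has modulus one, the distance between
two labels is `‖(-ζ) ^ n - 1‖`, which is the chord `‖ζ ^ n - 1‖ = 2|sin(πn/M)|` for even `n` and
`‖ζ ^ n + 1‖ = 2|cos(πn/M)|` for odd `n`.
-/

namespace Complex

theorem norm_exp_I_mul_ofReal_add_one (x : ℝ) :
    ‖exp (I * x) + 1‖ = 2 * |Real.cos (x / 2)| := by
  have h : exp (I * x) + 1 = -(exp (I * ↑(x + π)) - 1) := by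
    rw [ofReal_add, mul_add, exp_add, mul_comm I ↑π, exp_pi_mul_I]
    ring
  rw [h, norm_neg, norm_exp_I_mul_ofReal_sub_one, add_div, Real.sin_add_pi_div_two, norm_mul,
    Real.norm_two, Real.norm_eq_abs]

end Complex

theorem norm_pow_sub_pow_of_norm_eq_one {𝕜 : Type*} [NormedDivisionRing 𝕜] {z : 𝕜} (hz : ‖z‖ = 1)
    (k k' : ℕ) : ‖z ^ k - z ^ k'‖ = ‖z ^ ((k : ℤ) - k').natAbs - 1‖ := by
  wlog h : k' ≤ k generalizing k k'
  · rw [norm_sub_rev, this k' k (by omega), ← Int.natAbs_neg, neg_sub]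
  obtain ⟨d, rfl⟩ := Nat.exists_eq_add_of_le h
  rw [show ((k' + d : ℕ) : ℤ) - k' = d by push_cast; ring, Int.natAbs_natCast, pow_add,
    ← mul_sub_one, norm_mul, norm_pow, hz, one_pow, one_mul]

theorem ite_pow_mod_eq_neg_pow {R : Type*} [Ring R] {z : R} {M : ℕ} (hM : Even M)
    (hz : z ^ (M / 2) = -1) (k : ℕ) :
    (if Even k then z ^ k else z ^ ((k + M / 2) % M)) = (-z) ^ k := by
  have hzM : z ^ M = 1 := by
    rw [← Nat.div_two_mul_two_of_even hM, pow_mul, hz, neg_one_sq]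
  split_ifs with hk
  · rw [hk.neg_pow]
  · rw [← pow_eq_pow_mod _ hzM, pow_add, hz, mul_neg_one, (Nat.not_even_iff_odd.mp hk).neg_pow]

open Complex in
/-- Distances under the proposed relay labelling of `2^l`-PSK:
with `s k = exp(2πik/M)` and `X_r k = s k` for even `k`, `X_r k = s ((k + M/2) % M)`
for odd `k`, the distance `|X_r k - X_r k'|` equals `2|sin(πn/M)|` for even `n = |k - k'|`
and `2|cos(πn/M)|` for odd `n`. -/
theorem relay_labelling_distances (l : ℕ) (hl : 2 ≤ l) (M : ℕ) (hM : M = 2 ^ l)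
    (s : ℕ → ℂ)
    (hs : ∀ k, s k = Complex.exp (2 * (π : ℂ) * Complex.I * k / M))
    (Xr : ℕ → ℂ)
    (hXr : ∀ k, Xr k = if Even k then s k else s ((k + M / 2) % M)) :
    ∀ k k' : ℕ, k < M → k' < M → k ≠ k' →
      (Even ((k : ℤ) - k').natAbs →
        ‖Xr k - Xr k'‖
          = 2 * |Real.sin (π * ((k : ℤ) - k').natAbs / M)|) ∧
      (Odd ((k : ℤ) - k').natAbs →
        ‖Xr k - Xr k'‖
          = 2 * |Real.cos (π * ((k : ℤ) - k').natAbs / M)|) := by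
  intro k k' _ _ _
  have hMeven : Even M := hM ▸ (Nat.even_pow.mpr ⟨even_two, by omega⟩)
  have hM0 : (M : ℝ) ≠ 0 := by rw [hM]; positivity
  set θ : ℝ := 2 * π / M with hθ
  have hpow (n : ℕ) : exp (I * θ) ^ n = exp (I * ↑(n * θ)) := by
    rw [← Complex.exp_nat_mul]; push_cast; congr 1; ring
  have hs_pow (j : ℕ) : s j = exp (I * θ) ^ j := by
    rw [hs, hpow, hθ]; push_cast; congr 1; ring
  have hhalf : exp (I * θ) ^ (M / 2) = -1 := by
    have hpi : ((M / 2 : ℕ) : ℝ) * θ = π := by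
      rw [Nat.cast_div_charZero (even_iff_two_dvd.mp hMeven), Nat.cast_ofNat, hθ]
      field_simp
    rw [hpow, hpi, mul_comm, exp_pi_mul_I]
  have hXr_pow (j : ℕ) : Xr j = (-exp (I * θ)) ^ j := by
    rw [hXr]; simp only [hs_pow]; exact ite_pow_mod_eq_neg_pow hMeven hhalf j
  have hangle (n : ℝ) : n * θ / 2 = π * n / M := by ring
  rw [hXr_pow, hXr_pow, norm_pow_sub_pow_of_norm_eq_one (by simp), neg_pow, hpow]
  constructor
  · intro hn
    rw [hn.neg_one_pow, one_mul, norm_exp_I_mul_ofReal_sub_one, hangle, norm_mul, Real.norm_two,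
      Real.norm_eq_abs]
  · intro hn
    rw [hn.neg_one_pow, neg_one_mul, ← neg_add', norm_neg, norm_exp_I_mul_ofReal_add_one, hangle]
end

section
/- Let l ≥ 2 be an integer, M = 2^l, and let s_k = exp(2πik/M) for 0 ≤ k ≤ M - 1 denote the points of the M-PSK signal set. Define X_{s1}(k) = s_k and the relay labelling X_r by X_r(k) = s_k if k is even and X_r(k) = s_{(k + M/2) mod M} if k is odd. Then the minimum over all pairs k, k' ∈ {0, …, M - 1} with k ≠ k' of |X_{s1}(k) - X_{s1}(k')|² · |X_r(k) - X_r(k')|² equals min(16·sin⁴(2π/M), 4·sin²(2π/M)). -/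
/-!
Write `d = k - k'`. Adding `M/2` to an index negates an `M`-PSK point, so the relay labelling is
`X_r(k) = (-1)^k s_k`. For `k, k'` of equal parity the product is therefore
`|s_k - s_k'|⁴ = 16 sin⁴(πd/M)` with `d` even, and for different parity it is
`|s_k - s_k'|² |s_k + s_k'|² = 16 sin²(πd/M) cos²(πd/M) = 4 sin²(2πd/M)` with `d` odd.
In both cases the angle is `π e/(M/2)` with `M/2 ∤ e` (`e = d/2`, resp. `e = d`, using `4 ∣ M`),
and `sin²(π e/N) ≥ sin²(π/N)` whenever `N ∤ e`. The pairs `(0, 2)` and `(0, 1)` attain the two bounds.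
-/

open Real

theorem norm_exp_mul_I_sub_exp_mul_I_sq (x y : ℝ) :
    ‖Complex.exp (x * Complex.I) - Complex.exp (y * Complex.I)‖ ^ 2
      = 4 * sin ((x - y) / 2) ^ 2 := by
  have h : Complex.exp (x * Complex.I) - Complex.exp (y * Complex.I)
      = Complex.exp (y * Complex.I) * (Complex.exp (Complex.I * (x - y : ℝ)) - 1) := by
    rw [mul_sub, ← Complex.exp_add]; push_cast; ring_nf
  rw [h, norm_mul, Complex.norm_exp_ofReal_mul_I, one_mul,
    Complex.norm_exp_I_mul_ofReal_sub_one, norm_mul, Real.norm_eq_abs, Real.norm_eq_abs,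
    mul_pow, sq_abs, sq_abs]
  norm_num

theorem norm_exp_mul_I_add_exp_mul_I_sq (x y : ℝ) :
    ‖Complex.exp (x * Complex.I) + Complex.exp (y * Complex.I)‖ ^ 2
      = 4 * cos ((x - y) / 2) ^ 2 := by
  have h : Complex.exp (y * Complex.I) = -Complex.exp ((y + π : ℝ) * Complex.I) := by
    push_cast; rw [add_mul, Complex.exp_add, Complex.exp_pi_mul_I]; ring
  rw [h, ← sub_eq_add_neg, norm_exp_mul_I_sub_exp_mul_I_sq,
    show (x - (y + π)) / 2 = (x - y) / 2 - π / 2 by ring, sin_sub_pi_div_two, neg_sq]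

theorem sin_le_sin_of_le_of_le_pi_sub {x y : ℝ} (hy : 0 ≤ y) (hyx : y ≤ x) (hx : x ≤ π - y) :
    sin y ≤ sin x := by
  rcases le_total x (π / 2) with h | h
  · exact sin_le_sin_of_le_of_le_pi_div_two (by linarith) h hyx
  · rw [← sin_pi_sub x]
    exact sin_le_sin_of_le_of_le_pi_div_two (by linarith) (by linarith) (by linarith)

theorem sin_add_int_mul_pi_sq (x : ℝ) (n : ℤ) : sin (x + n * π) ^ 2 = sin x ^ 2 := by
  rw [sin_add_int_mul_pi, mul_pow, ← sq_abs ((-1 : ℝ) ^ n), abs_neg_one_zpow, one_pow, one_mul]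

theorem sin_sq_pi_div_le_of_not_dvd (N : ℕ) {e : ℤ} (he : ¬ (N : ℤ) ∣ e) :
    sin (π / N) ^ 2 ≤ sin (π * e / N) ^ 2 := by
  rcases N.eq_zero_or_pos with rfl | hN
  · simp
  have hNr : (0 : ℝ) < N := by exact_mod_cast hN
  set r := e % N with hr
  have hr_pos : 0 < r := by
    have := Int.emod_nonneg e (by omega : (N : ℤ) ≠ 0)
    have : r ≠ 0 := fun h => he (Int.dvd_of_emod_eq_zero h)
    omega
  have hr_lt : r < N := Int.emod_lt_of_pos e (by omega)
  have hperiod : π * e / N = π * r / N + (e / N : ℤ) * π := by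
    rw [hr, Int.emod_def]; push_cast; field_simp; ring
  have h1 : (1 : ℝ) ≤ r := by exact_mod_cast hr_pos
  have h2 : (r : ℝ) ≤ N - 1 := by
    have : r ≤ N - 1 := by omega
    exact_mod_cast this
  have hle : sin (π / N) ≤ sin (π * r / N) := by
    apply sin_le_sin_of_le_of_le_pi_sub (by positivity)
    · rw [div_le_div_iff_of_pos_right hNr]; nlinarith [pi_pos]
    · rw [show π - π / N = π * (N - 1) / N by field_simp, div_le_div_iff_of_pos_right hNr]
      nlinarith [pi_pos]
  have hnonneg : 0 ≤ sin (π / N) :=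
    sin_nonneg_of_nonneg_of_le_pi (by positivity)
      (div_le_self pi_pos.le (by exact_mod_cast hN))
  rw [hperiod, sin_add_int_mul_pi_sq]
  exact pow_le_pow_left₀ hnonneg hle 2

noncomputable def psk (M k : ℕ) : ℂ := Complex.exp (2 * π * Complex.I * k / M)

theorem psk_eq_exp (M k : ℕ) : psk M k = Complex.exp ((2 * π * k / M : ℝ) * Complex.I) := by
  rw [psk]; push_cast; ring_nf

theorem psk_mod (M k : ℕ) : psk M (k % M) = psk M k := by
  rcases eq_or_ne M 0 with rfl | hM
  · rw [Nat.mod_zero]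
  have hk : (k : ℂ) = (k % M : ℕ) + M * (k / M : ℕ) := by
    exact_mod_cast (Nat.mod_add_div k M).symm
  have hM' : (M : ℂ) ≠ 0 := by exact_mod_cast hM
  rw [psk, psk, hk, mul_add, add_div, Complex.exp_add,
    show 2 * π * Complex.I * (M * (k / M : ℕ)) / M = (k / M : ℕ) * (2 * π * Complex.I) by
      field_simp,
    Complex.exp_nat_mul_two_pi_mul_I, mul_one]

theorem psk_add_half {M : ℕ} (hM : Even M) (hM0 : M ≠ 0) (k : ℕ) :
    psk M (k + M / 2) = -psk M k := by
  obtain ⟨H, rfl⟩ := hM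
  have hH : (H : ℂ) ≠ 0 := by exact_mod_cast (by omega : H ≠ 0)
  rw [psk, psk, show (H + H) / 2 = H by omega, ← neg_one_mul, ← Complex.exp_pi_mul_I,
    ← Complex.exp_add]
  congr 1
  push_cast
  field_simp
  ring

theorem relay_eq_neg_one_pow_mul_psk {M : ℕ} (hM : Even M) (hM0 : M ≠ 0) (k : ℕ) :
    (if Even k then psk M k else psk M ((k + M / 2) % M)) = (-1) ^ k * psk M k := by
  split_ifs with hk
  · rw [hk.neg_one_pow, one_mul]
  · rw [psk_mod, psk_add_half hM hM0, (Nat.not_even_iff_odd.1 hk).neg_one_pow, neg_one_mul]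

theorem norm_neg_one_pow_mul_sub (z w : ℂ) (k k' : ℕ) :
    ‖(-1) ^ k * z - (-1) ^ k' * w‖ = ‖z - (-1) ^ (k + k') * w‖ := by
  have h : (-1 : ℂ) ^ k' = (-1) ^ k * (-1) ^ (k + k') := by
    rw [← pow_add, show k + (k + k') = 2 * k + k' by ring, pow_add, pow_mul, neg_one_sq,
      one_pow, one_mul]
  rw [h, mul_assoc, ← mul_sub, norm_mul, norm_pow, norm_neg, norm_one, one_pow, one_mul]

theorem psk_product_distance (M k k' : ℕ) :
    ‖psk M k - psk M k'‖ ^ 2 * ‖(-1) ^ k * psk M k - (-1) ^ k' * psk M k'‖ ^ 2 =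
      if Even (k + k') then 16 * sin (π * (k - k') / M) ^ 4
      else 4 * sin (2 * (π * (k - k') / M)) ^ 2 := by
  have hhalf : (2 * π * k / M - 2 * π * k' / M) / 2 = π * (k - k') / M := by ring
  rw [norm_neg_one_pow_mul_sub]
  split_ifs with h
  · rw [h.neg_one_pow, one_mul, psk_eq_exp, psk_eq_exp, norm_exp_mul_I_sub_exp_mul_I_sq, hhalf]
    ring
  · rw [(Nat.not_even_iff_odd.1 h).neg_one_pow, neg_one_mul, sub_neg_eq_add, psk_eq_exp,
      psk_eq_exp, norm_exp_mul_I_sub_exp_mul_I_sq, norm_exp_mul_I_add_exp_mul_I_sq, hhalf,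
      sin_two_mul]
    ring

theorem min_le_psk_product_distance {H : ℕ} (hH : Even H) {k k' : ℕ} (hk : k < 2 * H)
    (hk' : k' < 2 * H) (hne : k ≠ k') :
    min (16 * sin (π / H) ^ 4) (4 * sin (π / H) ^ 2) ≤
      ‖psk (2 * H) k - psk (2 * H) k'‖ ^ 2 *
        ‖(-1) ^ k * psk (2 * H) k - (-1) ^ k' * psk (2 * H) k'‖ ^ 2 := by
  have hsq : ∀ x, sin x ^ 4 = (sin x ^ 2) ^ 2 := fun x => by ring
  rw [psk_product_distance]
  split_ifs with hpar
  · obtain ⟨f, hf⟩ : Even ((k : ℤ) - k') := by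
      rwa [Int.even_sub, Int.even_coe_nat, Int.even_coe_nat, ← Nat.even_add]
    have hf_ndvd : ¬ (H : ℤ) ∣ f := fun hdvd => hne <| by
      have := Int.eq_zero_of_abs_lt_dvd hdvd (by rw [abs_lt]; omega)
      omega
    have harg : π * ((k : ℝ) - k') / ((2 * H : ℕ) : ℝ) = π * f / H := by
      rw [show (k : ℝ) - k' = ((k - k' : ℤ) : ℝ) by push_cast; ring, hf]
      push_cast
      ring
    rw [harg, hsq, hsq]
    have := sin_sq_pi_div_le_of_not_dvd H hf_ndvd
    calc _ ≤ 16 * (sin (π / H) ^ 2) ^ 2 := min_le_left _ _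
      _ ≤ 16 * (sin (π * f / H) ^ 2) ^ 2 := by gcongr
  · have hd_ndvd : ¬ (H : ℤ) ∣ (k - k') := fun hdvd => hpar <| by
      have := (Int.natCast_dvd_natCast.2 (even_iff_two_dvd.1 hH)).trans hdvd
      push_cast at this
      rwa [← even_iff_two_dvd, Int.even_sub, Int.even_coe_nat, Int.even_coe_nat,
        ← Nat.even_add] at this
    have harg : 2 * (π * ((k : ℝ) - k') / ((2 * H : ℕ) : ℝ)) = π * ((k - k' : ℤ) : ℝ) / H := by
      push_cast
      field_simp
    rw [harg]
    have := sin_sq_pi_div_le_of_not_dvd H hd_ndvd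
    calc _ ≤ 4 * sin (π / H) ^ 2 := min_le_right _ _
      _ ≤ _ := by gcongr

/-- For the proposed labelling scheme on `2^l`-PSK
(`X_{s1} k = s k`; `X_r k = s k` for even `k`, `s ((k + M/2) % M)` for odd `k`),
the minimum over pairs `k ≠ k'` of `|X_{s1} k - X_{s1} k'|² |X_r k - X_r k'|²`
equals `min(16 sin⁴(2π/M), 4 sin²(2π/M))`. -/
theorem labelling_scheme_product_distance (l : ℕ) (hl : 2 ≤ l) (M : ℕ) (hM : M = 2 ^ l)
    (s : ℕ → ℂ)
    (hs : ∀ k, s k = Complex.exp (2 * (π : ℂ) * Complex.I * k / M))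
    (Xs1 : ℕ → ℂ) (hXs1 : ∀ k, Xs1 k = s k)
    (Xr : ℕ → ℂ)
    (hXr : ∀ k, Xr k = if Even k then s k else s ((k + M / 2) % M)) :
    IsLeast {x : ℝ | ∃ k k' : ℕ, k < M ∧ k' < M ∧ k ≠ k' ∧
        x = ‖Xs1 k - Xs1 k'‖ ^ 2 * ‖Xr k - Xr k'‖ ^ 2}
      (min (16 * Real.sin (2 * π / M) ^ 4) (4 * Real.sin (2 * π / M) ^ 2)) := by
  obtain ⟨H, hH, hH2, rfl⟩ : ∃ H, Even H ∧ 2 ≤ H ∧ M = 2 * H :=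
    ⟨2 ^ (l - 1), Nat.even_pow.2 ⟨even_two, by omega⟩, Nat.le_self_pow (by omega) 2,
      by rw [hM, ← pow_succ']; congr 1; omega⟩
  have hs' : s = psk (2 * H) := funext hs
  have hXr' : ∀ k, Xr k = (-1) ^ k * psk (2 * H) k := fun k => by
    rw [hXr, hs', relay_eq_neg_one_pow_mul_psk (even_two_mul H) (by omega)]
  have h2pi : 2 * π / ((2 * H : ℕ) : ℝ) = π / H := by push_cast; field_simp
  simp only [hXs1, hs', hXr', h2pi]
  refine ⟨?_, fun x ⟨k, k', hk, hk', hne, hx⟩ => hx ▸ min_le_psk_product_distance hH hk hk' hne⟩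
  rcases min_choice (16 * sin (π / H) ^ 4) (4 * sin (π / H) ^ 2) with h | h <;> rw [h]
  · refine ⟨0, 2, by omega, by omega, by omega, ?_⟩
    rw [psk_product_distance, if_pos (by decide)]
    have harg : π * (((0 : ℕ) : ℝ) - (2 : ℕ)) / ((2 * H : ℕ) : ℝ) = -(π / H) := by
      push_cast; field_simp; ring
    rw [harg, sin_neg, Even.neg_pow (by decide)]
  · refine ⟨0, 1, by omega, by omega, by omega, ?_⟩
    rw [psk_product_distance, if_neg (by decide)]
    have harg : 2 * (π * (((0 : ℕ) : ℝ) - (1 : ℕ)) / ((2 * H : ℕ) : ℝ)) = -(π / H) := by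
      push_cast; field_simp; ring
    rw [harg, sin_neg, neg_sq]
end
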